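/- For every real x and every λ ∈ [0, 3/8], |e^{ix} − 1 − ix + x²/2 − λ(ix)³/6| ≤ (1−λ)·|x|³/6; in particular q₃(λ) = 1 − λ for 0 ≤ λ ≤ 3/8, where q₃(λ) = sup_{x>0} (6/x³)|e^{ix} − 1 − ix − (ix)²/2 − λ(ix)³/6|. -/

import Mathlib

/-!
Write `A = cos x - 1 + x²/2` and `S = sin x - x + x³/6`, so that
`e^{ix} - 1 - ix - (ix)²/2 - λ(ix)³/6 = A + i(S - (1 - λ)x³/6)`. Squaring, the upper bound
for `x ≥ 0` amounts to `A² + S² ≤ (1 - λ)x³S/3`, and since `S ≥ 0` it suffices to prove this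
for `1 - λ = 5/8`.
As `A' = x - sin x = x³/6 - S` and `S' = A`, the derivative of `5x³S/24 - A² - S²` is
`x²(5S - xA)/8`, and `5S - xA ≥ 0` follows by differentiating three more times, down to
`2 - 2 cos x - x sin x = 4 sin(x/2) (sin(x/2) - (x/2) cos(x/2))`, which is nonnegative on `[0, 2π]`.
The supremum is approached as `x → 0`, where `S = O(x⁵)`.
-/

open Real Set

theorem nonneg_of_deriv_nonneg {f : ℝ → ℝ} (hf : Differentiable ℝ f) (h₀ : f 0 = 0) {x : ℝ}
    (hx : 0 ≤ x) (hf' : ∀ y ∈ Ioo 0 x, 0 ≤ deriv f y) : 0 ≤ f x :=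
  h₀ ▸ monotoneOn_of_deriv_nonneg (convex_Icc 0 x) hf.continuous.continuousOn
    (fun y _ => (hf y).differentiableWithinAt) (by simpa using hf') ⟨le_rfl, hx⟩ ⟨hx, le_rfl⟩ hx

theorem sin_sub_mul_cos_nonneg {x : ℝ} (hx₀ : 0 ≤ x) (hxπ : x ≤ π) : 0 ≤ sin x - x * cos x := by
  refine nonneg_of_deriv_nonneg (f := fun y => sin y - y * cos y) (by fun_prop) (by simp) hx₀
    fun y hy => ?_
  have hsin : 0 ≤ sin y := sin_nonneg_of_nonneg_of_le_pi hy.1.le (hy.2.le.trans hxπ)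
  refine (mul_nonneg hy.1.le hsin).trans_eq ?_
  simp (disch := fun_prop)

theorem mul_sin_le_two_sub_two_cos {x : ℝ} (hx₀ : 0 ≤ x) (hx : x ≤ 2 * π) :
    x * sin x ≤ 2 - 2 * cos x := by
  have hhalf : 2 - 2 * cos x - x * sin x
      = 4 * sin (x / 2) * (sin (x / 2) - x / 2 * cos (x / 2)) := by
    conv_lhs => rw [← mul_div_cancel₀ x two_ne_zero, cos_two_mul', sin_two_mul]
    nlinarith [sin_sq_add_cos_sq (x / 2)]
  have hsin : 0 ≤ sin (x / 2) := sin_nonneg_of_nonneg_of_le_pi (by linarith) (by linarith)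
  nlinarith [sin_sub_mul_cos_nonneg (x := x / 2) (by linarith) (by linarith)]

theorem three_mul_sin_le {x : ℝ} (hx : 0 ≤ x) : 3 * sin x ≤ 2 * x + x * cos x := by
  rcases le_total x (2 * π) with hxπ | hxπ
  · refine sub_nonneg.1 <| nonneg_of_deriv_nonneg (f := fun y => 2 * y + y * cos y - 3 * sin y)
      (by fun_prop) (by simp) hx fun y hy => ?_
    refine (sub_nonneg.2 (mul_sin_le_two_sub_two_cos hy.1.le (hy.2.le.trans hxπ))).trans_eq ?_
    simp (disch := fun_prop)
    ring
  · nlinarith [pi_gt_three, sin_le_one x, neg_one_le_cos x]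

theorem four_sub_four_mul_cos_le {x : ℝ} (hx : 0 ≤ x) : 4 - 4 * cos x ≤ x * sin x + x ^ 2 := by
  refine sub_nonneg.1 <| nonneg_of_deriv_nonneg (f := fun y => y * sin y + y ^ 2 - (4 - 4 * cos y))
    (by fun_prop) (by simp) hx fun y hy => ?_
  refine (sub_nonneg.2 (three_mul_sin_le hy.1.le)).trans_eq ?_
  simp (disch := fun_prop)
  ring

theorem mul_cos_remainder_le_five_mul_sin_remainder {x : ℝ} (hx : 0 ≤ x) :
    x * (cos x - 1 + x ^ 2 / 2) ≤ 5 * (sin x - x + x ^ 3 / 6) := by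
  refine sub_nonneg.1 <| nonneg_of_deriv_nonneg
    (f := fun y => 5 * (sin y - y + y ^ 3 / 6) - y * (cos y - 1 + y ^ 2 / 2))
    (by fun_prop) (by simp) hx fun y hy => ?_
  refine (sub_nonneg.2 (four_sub_four_mul_cos_le hy.1.le)).trans_eq ?_
  simp (disch := fun_prop)
  ring

theorem cos_remainder_sq_add_sin_remainder_sq_le {x : ℝ} (hx : 0 ≤ x) :
    (cos x - 1 + x ^ 2 / 2) ^ 2 + (sin x - x + x ^ 3 / 6) ^ 2
      ≤ 5 / 24 * x ^ 3 * (sin x - x + x ^ 3 / 6) := by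
  refine sub_nonneg.1 <| nonneg_of_deriv_nonneg
    (f := fun y => 5 / 24 * y ^ 3 * (sin y - y + y ^ 3 / 6)
      - ((cos y - 1 + y ^ 2 / 2) ^ 2 + (sin y - y + y ^ 3 / 6) ^ 2))
    (by fun_prop) (by simp) hx fun y hy => ?_
  have hderiv : deriv (fun y => 5 / 24 * y ^ 3 * (sin y - y + y ^ 3 / 6)
      - ((cos y - 1 + y ^ 2 / 2) ^ 2 + (sin y - y + y ^ 3 / 6) ^ 2)) y
      = y ^ 2 / 8 * (5 * (sin y - y + y ^ 3 / 6) - y * (cos y - 1 + y ^ 2 / 2)) := by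
    simp (disch := fun_prop)
    ring
  rw [hderiv]
  exact mul_nonneg (by positivity)
    (sub_nonneg.2 (mul_cos_remainder_le_five_mul_sin_remainder hy.1.le))

noncomputable def expRemainder3 (l x : ℝ) : ℂ :=
  Complex.exp (Complex.I * x) - 1 - Complex.I * x - (Complex.I * x) ^ 2 / 2 -
    (l : ℂ) * (Complex.I * x) ^ 3 / 6

theorem expRemainder3_eq (l x : ℝ) :
    expRemainder3 l x
      = ((cos x - 1 + x ^ 2 / 2 : ℝ) : ℂ) + ((sin x - x + l * x ^ 3 / 6 : ℝ) : ℂ) * Complex.I := by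
  rw [expRemainder3, mul_comm Complex.I, Complex.exp_mul_I, ← Complex.ofReal_cos,
    ← Complex.ofReal_sin]
  push_cast
  linear_combination (-(x : ℂ) ^ 2 / 2 - l * x ^ 3 / 6 * Complex.I) * Complex.I_sq

theorem norm_expRemainder3 (l x : ℝ) :
    ‖expRemainder3 l x‖ = √((cos x - 1 + x ^ 2 / 2) ^ 2 + (sin x - x + l * x ^ 3 / 6) ^ 2) := by
  rw [expRemainder3_eq, Complex.norm_add_mul_I]

theorem norm_expRemainder3_neg (l x : ℝ) : ‖expRemainder3 l (-x)‖ = ‖expRemainder3 l x‖ := by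
  simp only [norm_expRemainder3, cos_neg, sin_neg]
  ring_nf

theorem norm_expRemainder3_le {l : ℝ} (hl : l ≤ 3 / 8) (x : ℝ) :
    ‖expRemainder3 l x‖ ≤ (1 - l) * |x| ^ 3 / 6 := by
  wlog hx : 0 ≤ x generalizing x
  · simpa only [norm_expRemainder3_neg, abs_neg] using this (-x) (by linarith)
  have hS : 0 ≤ sin x - x + x ^ 3 / 6 := by linarith [sin_ge_sub_cube hx]
  have hweight : 5 / 24 * x ^ 3 * (sin x - x + x ^ 3 / 6)
      ≤ (1 - l) / 3 * x ^ 3 * (sin x - x + x ^ 3 / 6) := by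
    gcongr ?_ * _ * _
    linarith
  have hl₁ : 0 ≤ 1 - l := by linarith
  rw [abs_of_nonneg hx, norm_expRemainder3, sqrt_le_left (by positivity)]
  linarith [cos_remainder_sq_add_sin_remainder_sq_le hx]

theorem one_sub_sub_le_norm_expRemainder3 (l : ℝ) {z : ℝ} (hz₀ : 0 < z) (hz₁ : z ≤ 1) :
    1 - l - z ≤ 6 / z ^ 3 * ‖expRemainder3 l z‖ := by
  have him : -(sin z - z + l * z ^ 3 / 6) ≤ ‖expRemainder3 l z‖ := by
    rw [norm_expRemainder3]
    refine (neg_le_abs _).trans ?_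
    rw [← sqrt_sq_eq_abs]
    exact sqrt_le_sqrt (le_add_of_nonneg_left (sq_nonneg _))
  have hsin := (abs_le.1 (sin_bound (x := z) (by rwa [abs_of_pos hz₀]))).2
  rw [abs_of_pos hz₀] at hsin
  rw [div_mul_eq_mul_div, le_div_iff₀ (by positivity)]
  nlinarith [mul_nonneg (pow_nonneg hz₀.le 4) (sub_nonneg.2 hz₁), pow_pos hz₀ 5]

noncomputable def q3 (l : ℝ) : ℝ :=
  sSup {y : ℝ | ∃ z : ℝ, 0 < z ∧ y = 6 / z ^ 3 * ‖expRemainder3 l z‖}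

theorem q3_eq {l : ℝ} (hl : l ≤ 3 / 8) : q3 l = 1 - l := by
  refine csSup_eq_of_forall_le_of_forall_lt_exists_gt ⟨_, 1, one_pos, rfl⟩ ?_ fun w hw => ?_
  · rintro y ⟨z, hz, rfl⟩
    have := norm_expRemainder3_le hl z
    rw [abs_of_pos hz] at this
    calc 6 / z ^ 3 * ‖expRemainder3 l z‖ ≤ 6 / z ^ 3 * ((1 - l) * z ^ 3 / 6) := by gcongr
      _ = 1 - l := by field_simp
  · set z := min 1 ((1 - l - w) / 2)
    have hz₀ : 0 < z := lt_min one_pos (by linarith)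
    refine ⟨_, ⟨z, hz₀, rfl⟩, ?_⟩
    linarith [one_sub_sub_le_norm_expRemainder3 l hz₀ (min_le_left _ _),
      min_le_right 1 ((1 - l - w) / 2)]

theorem q3_on_flat_part_general (x l : ℝ) (hl : l ≤ 3 / 8) :
    ‖Complex.exp (Complex.I * x) - 1 - Complex.I * x + (x : ℂ) ^ 2 / 2 -
      (l : ℂ) * (Complex.I * x) ^ 3 / 6‖ ≤ (1 - l) * |x| ^ 3 / 6 ∧
    sSup {y : ℝ | ∃ z : ℝ, 0 < z ∧
      y = 6 / z ^ 3 *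
        ‖Complex.exp (Complex.I * z) - 1 - Complex.I * z - (Complex.I * z) ^ 2 / 2 -
          (l : ℂ) * (Complex.I * z) ^ 3 / 6‖} = 1 - l := by
  have hrem : Complex.exp (Complex.I * x) - 1 - Complex.I * x + (x : ℂ) ^ 2 / 2 -
      (l : ℂ) * (Complex.I * x) ^ 3 / 6 = expRemainder3 l x := by
    rw [expRemainder3]
    linear_combination (x : ℂ) ^ 2 / 2 * Complex.I_sq
  rw [hrem]
  exact ⟨norm_expRemainder3_le hl x, q3_eq hl⟩

theorem q3_on_flat_part (x l : ℝ) (hl0 : 0 ≤ l) (hl : l ≤ 3 / 8) :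
    ‖Complex.exp (Complex.I * x) - 1 - Complex.I * x + (x : ℂ) ^ 2 / 2 -
      (l : ℂ) * (Complex.I * x) ^ 3 / 6‖ ≤ (1 - l) * |x| ^ 3 / 6 ∧
    sSup {y : ℝ | ∃ z : ℝ, 0 < z ∧
      y = 6 / z ^ 3 *
        ‖Complex.exp (Complex.I * z) - 1 - Complex.I * z - (Complex.I * z) ^ 2 / 2 -
          (l : ℂ) * (Complex.I * z) ^ 3 / 6‖} = 1 - l :=
  q3_on_flat_part_general x l hl
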